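/- arXiv:2501.01906 — 7 statements merged into one kernel-verified Lean document; each statement's English description precedes it below -/
import Mathlib

section
/- Let K be an infinite field, and let r, n, d ≥ 1 be integers with m = binom(n+d, n). Then there exist points P_1, …, P_r ∈ ℙⁿ(K) such that the K-vector space {F ∈ S_{n,d}(K) : F(P_i) = 0 for every 1 ≤ i ≤ r} has dimension exactly max(m − r, 0). -/
/-!
Evaluation at a point is a linear functional on the space of degree-`d` forms. Choose the points
greedily: as long as the forms vanishing at the points chosen so far form a nonzero space, it
contains a nonzero form, which over an infinite field does not vanish at some point; since the
form has positive degree it vanishes at the origin, so that point is nonzero, and adding it cuts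
the dimension by exactly one. Once the space is zero any nonzero point will do. Starting from
the monomial count `dim S_{n,d} = (n + d).choose n`, `r` steps leave dimension `m - r`, truncated.
-/

open Module MvPolynomial LinearMap

theorem Fin.iInf_snoc {α : Type*} [CompleteLattice α] {r : ℕ} (f : Fin r → α) (a : α) :
    ⨅ i, (Fin.snoc f a : Fin (r + 1) → α) i = (⨅ i, f i) ⊓ a := by
  rw [← (finSuccEquivLast (n := r)).symm.iInf_comp, iInf_option, inf_comm]
  simp

theorem Submodule.finrank_inf_ker_add_one {K M : Type*} [Field K] [AddCommGroup M] [Module K M]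
    {V : Submodule K M} [FiniteDimensional K V] {f : M →ₗ[K] K} {x : M} (hx : x ∈ V)
    (hfx : f x ≠ 0) :
    finrank K ↥(V ⊓ ker f) + 1 = finrank K V := by
  have hf : f.domRestrict V ≠ 0 := fun h => hfx (by simpa using LinearMap.congr_fun h ⟨x, hx⟩)
  rw [← Module.Dual.finrank_ker_add_one_of_ne_zero hf, ker_domRestrict,
    ← Submodule.map_comap_subtype,
    (Submodule.equivMapOfInjective _ V.injective_subtype _).finrank_eq]

section Separating

variable {K M ι : Type*} [Field K] [AddCommGroup M] [Module K M] [Nonempty ι]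
  {f : ι → M →ₗ[K] K}

theorem Submodule.exists_finrank_inf_ker_eq_sub_one (V : Submodule K M) [FiniteDimensional K V]
    (hf : ∀ x ∈ V, x ≠ 0 → ∃ i, f i x ≠ 0) :
    ∃ i, finrank K ↥(V ⊓ ker (f i)) = finrank K V - 1 := by
  rcases eq_or_ne V ⊥ with rfl | hV
  · exact ⟨Classical.arbitrary ι, by simp⟩
  · obtain ⟨x, hxV, hx0⟩ := V.exists_mem_ne_zero_of_ne_bot hV
    obtain ⟨i, hi⟩ := hf x hxV hx0
    exact ⟨i, by rw [← Submodule.finrank_inf_ker_add_one hxV hi, Nat.add_sub_cancel]⟩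

theorem Submodule.exists_finrank_inf_iInf_ker_eq_sub (W : Submodule K M) [FiniteDimensional K W]
    (hf : ∀ x ∈ W, x ≠ 0 → ∃ i, f i x ≠ 0) (r : ℕ) :
    ∃ s : Fin r → ι, finrank K ↥(W ⊓ ⨅ j, ker (f (s j))) = finrank K W - r := by
  induction r with
  | zero => exact ⟨Fin.elim0, by rw [iInf_of_empty, inf_top_eq, Nat.sub_zero]⟩
  | succ r ih =>
    obtain ⟨s, hs⟩ := ih
    set V := W ⊓ ⨅ j, ker (f (s j))
    obtain ⟨i, hi⟩ := V.exists_finrank_inf_ker_eq_sub_one (f := f)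
      fun x hx => hf x (Submodule.mem_inf.mp hx).1
    refine ⟨Fin.snoc s i, ?_⟩
    have hsnoc := Fin.comp_snoc (fun i => ker (f i)) s i
    simp only [Function.comp_def] at hsnoc
    rw [hsnoc, Fin.iInf_snoc, ← inf_assoc, hi, hs]
    omega

end Separating

theorem Finsupp.natCard_setOf_degree_eq (σ : Type*) (d : ℕ) :
    Nat.card {s : σ →₀ ℕ | s.degree = d} = (Nat.card σ + d - 1).choose d := by
  classical
  rw [← Sym.natCard_sym_eq_choose, Nat.card_congr (Sym.equivNatSum σ d)]
  rfl

theorem MvPolynomial.finrank_homogeneousSubmodule (σ K : Type*) [Field K] (d : ℕ) :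
    finrank K (homogeneousSubmodule σ K d) = (Nat.card σ + d - 1).choose d := by
  rw [homogeneousSubmodule_eq_finsupp_supported, ← Finsupp.natCard_setOf_degree_eq]
  exact finrank_eq_nat_card_basis (basisRestrictSupport K _)

theorem MvPolynomial.IsHomogeneous.exists_eval_ne_zero {σ R : Type*} [CommRing R] [IsDomain R]
    [Infinite R] {F : MvPolynomial σ R} {d : ℕ} (hF : F.IsHomogeneous d) (hd : d ≠ 0)
    (hF0 : F ≠ 0) : ∃ x ≠ 0, eval x F ≠ 0 := by
  obtain ⟨x, hx⟩ : ∃ x, eval x F ≠ 0 := by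
    by_contra! h
    exact hF0 (hF.eq_zero_of_forall_eval_eq_zero h)
  refine ⟨x, ?_, hx⟩
  rintro rfl
  exact hx (by simpa [constantCoeff_eq] using hF.coeff_eq_zero (by simpa using hd.symm))

theorem stmt5_general (K : Type*) [Field K] [Infinite K]
    (r n d : ℕ) (hd : 1 ≤ d) :
    ∃ P : Fin r → (Fin (n + 1) → K), (∀ i, P i ≠ 0) ∧
      Module.finrank K
        ↥(MvPolynomial.homogeneousSubmodule (Fin (n + 1)) K d ⊓
          ⨅ i : Fin r, LinearMap.ker (MvPolynomial.aeval (R := K) (S₁ := K) (P i)).toLinearMap) =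
        (n + d).choose n - r := by
  have : Nonempty {x : Fin (n + 1) → K // x ≠ 0} := ⟨⟨1, one_ne_zero⟩⟩
  have := Module.Finite.iff_fg.mpr (homogeneousSubmodule_fg (Fin (n + 1)) K d)
  have hsep : ∀ F ∈ homogeneousSubmodule (Fin (n + 1)) K d, F ≠ 0 →
      ∃ x : {x : Fin (n + 1) → K // x ≠ 0}, aeval x.1 F ≠ 0 := fun F hF hF0 => by
    obtain ⟨x, hx0, hx⟩ := IsHomogeneous.exists_eval_ne_zero hF (by omega) hF0
    exact ⟨⟨x, hx0⟩, by simpa [coe_aeval_eq_eval] using hx⟩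
  obtain ⟨P, hP⟩ := Submodule.exists_finrank_inf_iInf_ker_eq_sub
    (f := fun x : {x : Fin (n + 1) → K // x ≠ 0} => (aeval x.1).toLinearMap) _ hsep r
  refine ⟨fun i => P i, fun i => (P i).2, ?_⟩
  rw [hP, finrank_homogeneousSubmodule, Nat.card_eq_fintype_card, Fintype.card_fin,
    Nat.add_right_comm, Nat.add_sub_cancel, Nat.choose_symm_add]

/-- **Lemma (infinite fields).** Let `K` be an infinite field and `r, n, d ≥ 1` integers with
`m = (n+d).choose n`. Then there exist points `P_1, …, P_r ∈ ℙⁿ(K)` (nonzero vectors in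
`K^{n+1}`) such that the space of degree-`d` forms over `K` vanishing at all of them has
dimension exactly `max (m - r) 0 = m - r` (truncated subtraction). -/
theorem stmt5 (K : Type*) [Field K] [Infinite K]
    (r n d : ℕ) (hr : 1 ≤ r) (hn : 1 ≤ n) (hd : 1 ≤ d) :
    ∃ P : Fin r → (Fin (n + 1) → K), (∀ i, P i ≠ 0) ∧
      Module.finrank K
        ↥(MvPolynomial.homogeneousSubmodule (Fin (n + 1)) K d ⊓
          ⨅ i : Fin r, LinearMap.ker (MvPolynomial.aeval (R := K) (S₁ := K) (P i)).toLinearMap) =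
        (n + d).choose n - r :=
  stmt5_general K r n d hd
end

section
/- Let q be a prime power, d ≥ 1 and r ≥ 2 integers. A point P ∈ ℙ¹(F_{q^r}) satisfies dim_{F_q}{F ∈ S_{1,d}(F_q) : F(P) = 0} = max(d + 1 − r, 0) if and only if P = [θ : 1] for some θ ∈ F_{q^r} that does not lie in F_{q^k} for any k < min(r, d+1). In particular, the number of such points equals the number of θ ∈ F_{q^r} whose degree over F_q is at least min(r, d+1). -/
/-!
Evaluation at `P = (a : b)` maps the binary forms of degree `d` onto the `F`-span of the
products `a ^ i * b ^ (d - i)`, so the kernel has dimension `d + 1` minus the dimension of that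
span. At infinity (`b = 0`) the span is the line through `a ^ d`, so the kernel has dimension
`d`, which is not `d + 1 - r` since `d ≥ 1` and `r ≥ 2`. Otherwise the span is `b ^ d` times the
span of `1, θ, …, θ ^ d` for `θ = a / b`, of dimension `min (d + 1) (deg θ)`; as `deg θ ≤ r`, the
kernel has dimension `d + 1 - r` exactly when `deg θ ≥ min r (d + 1)`.
-/

open Module Submodule MvPolynomial
open scoped LinearAlgebra.Projectivization

theorem finrank_span_range_pow {K S : Type*} [Field K] [Ring S] [Algebra K S] {x : S}
    (hx : IsIntegral K x) (m : ℕ) :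
    finrank K (span K (Set.range fun i : Fin m => x ^ (i : ℕ))) =
      min m (minpoly K x).natDegree := by
  set n := (minpoly K x).natDegree
  rcases le_total m n with h | h
  · rw [min_eq_left h]
    exact (finrank_span_eq_card ((linearIndependent_pow x).comp _ (Fin.castLE_injective h))).trans
      (Fintype.card_fin m)
  · have hspan : span K (Set.range fun i : Fin m => x ^ (i : ℕ)) =
        span K (Set.range fun i : Fin n => x ^ (i : ℕ)) :=
      le_antisymm
        (span_le.mpr <| Set.range_subset_iff.mpr fun i => hx.mem_span_pow ⟨.X ^ (i : ℕ), by simp⟩)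
        (span_mono <| Set.range_subset_iff.mpr fun i => ⟨Fin.castLE h i, rfl⟩)
    rw [min_eq_right h, hspan, finrank_span_eq_card (linearIndependent_pow x), Fintype.card_fin]

theorem Submodule.finrank_inf_ker_add_finrank_map {K V W : Type*} [DivisionRing K]
    [AddCommGroup V] [Module K V] [AddCommGroup W] [Module K W] (p : Submodule K V)
    [FiniteDimensional K p] (f : V →ₗ[K] W) :
    finrank K ↥(p ⊓ LinearMap.ker f) + finrank K (p.map f) = finrank K p := by
  have h := LinearMap.finrank_range_add_finrank_ker (f.domRestrict p)
  rw [LinearMap.range_domRestrict, LinearMap.ker_domRestrict, ← finrank_map_subtype_eq,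
    map_comap_subtype] at h
  omega

namespace MvPolynomial

noncomputable def binaryExponent (d : ℕ) (i : Fin (d + 1)) : Fin 2 →₀ ℕ :=
  Finsupp.single (0 : Fin 2) (i : ℕ) + Finsupp.single 1 (d - i)

@[simp]
theorem binaryExponent_apply_zero (d : ℕ) (i : Fin (d + 1)) : binaryExponent d i 0 = i := by
  simp [binaryExponent]

@[simp]
theorem binaryExponent_apply_one (d : ℕ) (i : Fin (d + 1)) : binaryExponent d i 1 = d - i := by
  simp [binaryExponent]

theorem binaryExponent_injective (d : ℕ) : Function.Injective (binaryExponent d) :=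
  fun i j h => Fin.ext <| by simpa using congrArg (· 0) h

theorem range_binaryExponent (d : ℕ) :
    Set.range (binaryExponent d) = {s | s.degree = d} := by
  ext s
  simp only [Set.mem_range, Set.mem_ofPred_eq, Finsupp.degree_eq_sum, Fin.sum_univ_two]
  constructor
  · rintro ⟨i, rfl⟩
    simp only [binaryExponent_apply_zero, binaryExponent_apply_one]
    omega
  · intro hs
    refine ⟨⟨s 0, by omega⟩, Finsupp.ext fun j => ?_⟩
    match j with
    | 0 => exact binaryExponent_apply_zero d _
    | 1 => rw [binaryExponent_apply_one, Fin.val_mk]; omega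

theorem homogeneousSubmodule_fin_two_eq_span (R : Type*) [CommSemiring R] (d : ℕ) :
    homogeneousSubmodule (Fin 2) R d =
      span R (Set.range fun i => monomial (binaryExponent d i) (1 : R)) := by
  rw [homogeneousSubmodule_eq_finsupp_supported, AddMonoidAlgebra.supported,
    Finsupp.supported_eq_span_single, ← range_binaryExponent, ← Set.range_comp,
    comap_equiv_eq_map_symm, map_span, ← Set.range_comp]
  rfl

theorem finrank_homogeneousSubmodule_fin_two (R : Type*) [CommRing R] [Nontrivial R] (d : ℕ) :
    finrank R (homogeneousSubmodule (Fin 2) R d) = d + 1 := by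
  rw [homogeneousSubmodule_fin_two_eq_span, finrank_span_eq_card, Fintype.card_fin]
  exact (basisMonomials (Fin 2) R).linearIndependent.comp _ (binaryExponent_injective d)

theorem map_aeval_homogeneousSubmodule_fin_two {R S : Type*} [CommSemiring R] [CommSemiring S]
    [Algebra R S] (d : ℕ) (v : Fin 2 → S) :
    (homogeneousSubmodule (Fin 2) R d).map (aeval v).toLinearMap =
      span R (Set.range fun i : Fin (d + 1) => v 0 ^ (i : ℕ) * v 1 ^ (d - i)) := by
  rw [homogeneousSubmodule_fin_two_eq_span, map_span, ← Set.range_comp]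
  congr! with i
  simp [binaryExponent, aeval_monomial, Finsupp.prod_add_index, pow_add]

end MvPolynomial

section BinaryPowers

variable {K E : Type*} [Field K] [Field E] [Algebra K E]

theorem finrank_span_pow_mul_pow_of_ne_zero (d : ℕ) (a : E) {b : E} (hb : b ≠ 0)
    (hab : IsIntegral K (a / b)) :
    finrank K (span K (Set.range fun i : Fin (d + 1) => a ^ (i : ℕ) * b ^ (d - i))) =
      min (d + 1) (minpoly K (a / b)).natDegree := by
  have hrange : (Set.range fun i : Fin (d + 1) => a ^ (i : ℕ) * b ^ (d - i)) =
      LinearMap.mulLeft K (b ^ d) '' Set.range fun i : Fin (d + 1) => (a / b) ^ (i : ℕ) := by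
    rw [← Set.range_comp]
    congr! with i
    simp only [Function.comp_apply, LinearMap.mulLeft_apply, div_pow]
    rw [← pow_mul_pow_sub b (Nat.lt_succ_iff.mp i.2)]
    field_simp
  rw [hrange, ← map_span, ← finrank_span_range_pow hab]
  exact (Submodule.equivMapOfInjective _ (mul_right_injective₀ (pow_ne_zero d hb)) _).finrank_eq.symm

theorem span_pow_mul_zero_pow (d : ℕ) (a : E) :
    span K (Set.range fun i : Fin (d + 1) => a ^ (i : ℕ) * 0 ^ (d - i)) = K ∙ a ^ d := by
  have hrange : (Set.range fun i : Fin (d + 1) => a ^ (i : ℕ) * 0 ^ (d - i)) ⊆ {0, a ^ d} := by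
    rintro _ ⟨i, rfl⟩
    rcases (Nat.lt_succ_iff.mp i.2).lt_or_eq with h | h
    · simp [zero_pow (Nat.sub_ne_zero_of_lt h)]
    · simp [h]
  refine le_antisymm ((span_mono hrange).trans (by simp [span_insert_zero])) ?_
  exact (span_singleton_le_iff_mem _ _).mpr (subset_span ⟨Fin.last d, by simp⟩)

end BinaryPowers

namespace Projectivization

variable {K : Type*} [Field K]

theorem vecCons_one_ne_zero (θ : K) : ![θ, 1] ≠ 0 :=
  fun h => one_ne_zero (congrFun h 1)

theorem eq_mk_vecCons_one_iff (P : ℙ K (Fin 2 → K)) (θ : K) :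
    P = mk K ![θ, 1] (vecCons_one_ne_zero θ) ↔ P.rep 1 ≠ 0 ∧ θ = P.rep 0 / P.rep 1 := by
  conv_lhs => rw [← mk_rep P, mk_eq_mk_iff']
  constructor
  · rintro ⟨a, ha⟩
    have h0 : a * θ = P.rep 0 := by simpa using congrFun ha 0
    have h1 : a = P.rep 1 := by simpa using congrFun ha 1
    have ha0 : a ≠ 0 := by
      rintro rfl
      exact P.rep_nonzero (by rw [← ha, zero_smul])
    subst h1
    exact ⟨ha0, by rw [← h0, mul_div_cancel_left₀ _ ha0]⟩
  · rintro ⟨h1, rfl⟩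
    refine ⟨P.rep 1, ?_⟩
    ext i
    fin_cases i <;> simp [mul_div_cancel₀ _ h1]

theorem mk_vecCons_one_injective :
    Function.Injective fun θ : K => mk K ![θ, 1] (vecCons_one_ne_zero θ) := by
  intro θ θ' h
  rw [((eq_mk_vecCons_one_iff _ θ).mp rfl).2, ((eq_mk_vecCons_one_iff _ θ').mp h).2]

end Projectivization

theorem finrank_homogeneousSubmodule_inf_ker_aeval_add {F E : Type*} [Field F] [Field E]
    [Algebra F E] (d : ℕ) (v : Fin 2 → E) :
    finrank F ↥(homogeneousSubmodule (Fin 2) F d ⊓ LinearMap.ker (aeval v).toLinearMap) +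
        finrank F (span F (Set.range fun i : Fin (d + 1) => v 0 ^ (i : ℕ) * v 1 ^ (d - i))) =
      d + 1 := by
  have : FiniteDimensional F (homogeneousSubmodule (Fin 2) F d) :=
    Module.Finite.iff_fg.mpr (homogeneousSubmodule_fg _ _ _)
  rw [← map_aeval_homogeneousSubmodule_fin_two, finrank_inf_ker_add_finrank_map,
    finrank_homogeneousSubmodule_fin_two]

theorem stmt7 (F E : Type*) [Field F] [Field E] [Algebra F E]
    (r d : ℕ) (hr : 2 ≤ r) (hd : 1 ≤ d) (hE : Module.finrank F E = r) :
    (∀ P : Projectivization E (Fin 2 → E),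
      (Module.finrank F
          ↥(MvPolynomial.homogeneousSubmodule (Fin 2) F d ⊓
            LinearMap.ker (MvPolynomial.aeval (R := F) (S₁ := E) P.rep).toLinearMap) =
          (d + 1) - r
        ↔ ∃ θ : E, min r (d + 1) ≤ (minpoly F θ).natDegree ∧
            P = Projectivization.mk E ![θ, 1]
              (by intro h; have h1 := congrFun h 1; simp at h1))) ∧
    Nat.card {P : Projectivization E (Fin 2 → E) //
        Module.finrank F
          ↥(MvPolynomial.homogeneousSubmodule (Fin 2) F d ⊓
            LinearMap.ker (MvPolynomial.aeval (R := F) (S₁ := E) P.rep).toLinearMap) =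
          (d + 1) - r} =
      Nat.card {θ : E // min r (d + 1) ≤ (minpoly F θ).natDegree} := by
  have : FiniteDimensional F E := Module.finite_of_finrank_pos (by omega)
  have key : ∀ P : ℙ E (Fin 2 → E),
      finrank F ↥(homogeneousSubmodule (Fin 2) F d ⊓ LinearMap.ker (aeval P.rep).toLinearMap) =
          d + 1 - r ↔
        ∃ θ : E, min r (d + 1) ≤ (minpoly F θ).natDegree ∧
          P = Projectivization.mk E ![θ, 1] (Projectivization.vecCons_one_ne_zero θ) := by
    intro P
    have hdim := finrank_homogeneousSubmodule_inf_ker_aeval_add (F := F) d P.rep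
    simp only [Projectivization.eq_mk_vecCons_one_iff, exists_eq_right_right]
    by_cases hb : P.rep 1 = 0
    · have ha : P.rep 0 ≠ 0 := fun ha =>
        P.rep_nonzero (by ext i; fin_cases i <;> simp [ha, hb])
      rw [hb, span_pow_mul_zero_pow, finrank_span_singleton (pow_ne_zero d ha)] at hdim
      simp only [hb, ne_eq, not_true, and_false, iff_false]
      omega
    · rw [finrank_span_pow_mul_pow_of_ne_zero d _ hb (.of_finite F _)] at hdim
      have := hE ▸ minpoly.natDegree_le (A := F) (P.rep 0 / P.rep 1)
      simp only [hb, ne_eq, not_false_eq_true, and_true]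
      omega
  refine ⟨key, (Nat.card_congr <| Equiv.subtypeEquivRight fun P =>
    (key P).trans <| exists_congr fun _ => and_congr_right' eq_comm).trans
      (Nat.card_image_of_injective Projectivization.mk_vecCons_one_injective {θ | _})⟩
end

section
/- Let q be a prime power and let n ≥ n' ≥ 1, d ≥ 1 and 1 ≤ r ≤ m' := binom(n'+d, n') be integers; set m = binom(n+d, n). If there exists a point P' ∈ ℙ^{n'}(F_{q^r}) such that dim_{F_q}{F ∈ S_{n',d}(F_q) : F(P') = 0} = m' − r, then there exists a point P ∈ ℙⁿ(F_{q^r}) such that dim_{F_q}{F ∈ S_{n,d}(F_q) : F(P) = 0} = m − r. -/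
/-! Since `dim E = r ≤ m'`, the forms of degree `d` vanishing at `P'` have codimension `r`
exactly when evaluation at `P'` maps the forms of degree `d` onto `E`. Padding `P'` with zeros
gives a point `P` of `ℙⁿ`, and renaming variables turns a form in `n' + 1` variables into one in
`n + 1` variables with the same value at `P` as the original at `P'`; so evaluation at `P` is onto
as well, and since `m' ≤ m` its kernel has codimension `r`. -/

open Module LinearMap

theorem LinearMap.finrank_ker_eq_sub_iff_surjective {K V W : Type*} [Field K]
    [AddCommGroup V] [Module K V] [AddCommGroup W] [Module K W]
    [FiniteDimensional K V] [FiniteDimensional K W] (f : V →ₗ[K] W)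
    (hWV : finrank K W ≤ finrank K V) :
    finrank K (ker f) = finrank K V - finrank K W ↔ Function.Surjective f := by
  have hrank := f.finrank_range_add_finrank_ker
  rw [← range_eq_top]
  constructor
  · intro hker
    exact Submodule.eq_top_of_finrank_eq (by omega)
  · intro htop
    rw [htop, finrank_top] at hrank
    omega

theorem Submodule.finrank_inf_ker {R M N : Type*} [Ring R] [AddCommGroup M] [Module R M]
    [AddCommGroup N] [Module R N] (p : Submodule R M) (f : M →ₗ[R] N) :
    finrank R ↥(p ⊓ ker f) = finrank R (ker (f.domRestrict p)) := by
  rw [ker_domRestrict, ← Submodule.finrank_map_subtype_eq, Submodule.map_comap_subtype]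

namespace MvPolynomial

variable {σ τ R S : Type*}

instance [CommSemiring R] [Finite σ] (d : ℕ) : Module.Finite R (homogeneousSubmodule σ R d) :=
  Module.Finite.iff_fg.mpr (homogeneousSubmodule_fg σ R d)

theorem finrank_homogeneousSubmodule_s8 [CommRing R] [StrongRankCondition R] [Fintype σ] (d : ℕ) :
    finrank R (homogeneousSubmodule σ R d) = (Fintype.card σ + d - 1).choose d := by
  classical
  have hbasis :
      finrank R (homogeneousSubmodule σ R d) = Nat.card {x : σ →₀ ℕ | x.degree = d} := by
    rw [homogeneousSubmodule_eq_finsupp_supported]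
    exact finrank_eq_nat_card_basis (basisRestrictSupport R _)
  have hdeg :
      {x : σ →₀ ℕ | x.degree = d} = ↑((Finset.univ : Finset σ).finsuppAntidiag d) := by
    ext x
    simp [Finsupp.degree_eq_sum]
  rw [hbasis, hdeg, Nat.card_coe_set_eq, Set.ncard_coe_finset,
    Finset.card_finsuppAntidiag_nat_eq_choose, Finset.card_univ]

theorem finrank_homogeneousSubmodule_fin [CommRing R] [StrongRankCondition R] (n d : ℕ) :
    finrank R (homogeneousSubmodule (Fin (n + 1)) R d) = (n + d).choose n := by
  rw [finrank_homogeneousSubmodule_s8, Fintype.card_fin, Nat.add_right_comm, Nat.add_sub_cancel,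
    Nat.choose_symm_add]

variable (R) in
noncomputable def homogeneousEval [CommSemiring R] [CommSemiring S] [Algebra R S] (d : ℕ)
    (P : σ → S) : homogeneousSubmodule σ R d →ₗ[R] S :=
  (aeval P).toLinearMap.domRestrict _

theorem surjective_homogeneousEval_of_comp [CommSemiring R] [CommSemiring S] [Algebra R S]
    {d : ℕ} (ι : σ → τ) {Q : τ → S}
    (h : Function.Surjective (homogeneousEval R d (Q ∘ ι))) :
    Function.Surjective (homogeneousEval R d Q) := by
  intro e
  obtain ⟨⟨g, hg⟩, rfl⟩ := h e
  exact ⟨⟨rename ι g, hg.rename_isHomogeneous⟩, by simp [homogeneousEval, aeval_rename]⟩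

theorem finrank_homogeneousSubmodule_inf_ker_aeval_eq_iff [Field R] [Finite σ] [CommRing S]
    [Algebra R S] [FiniteDimensional R S] {d : ℕ}
    (hS : finrank R S ≤ finrank R (homogeneousSubmodule σ R d)) (P : σ → S) :
    finrank R ↥(homogeneousSubmodule σ R d ⊓ ker (aeval P).toLinearMap) =
        finrank R (homogeneousSubmodule σ R d) - finrank R S ↔
      Function.Surjective (homogeneousEval R d P) := by
  rw [Submodule.finrank_inf_ker]
  exact (homogeneousEval R d P).finrank_ker_eq_sub_iff_surjective hS

end MvPolynomial

theorem stmt8_general (F E : Type*) [Field F] [Field E] [Algebra F E]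
    (n n' d r : ℕ) (hnn : n' ≤ n)
    (hr1 : 1 ≤ r) (hrm : r ≤ (n' + d).choose n') (hE : Module.finrank F E = r)
    (P' : Fin (n' + 1) → E) (hP' : P' ≠ 0)
    (h : Module.finrank F
        ↥(MvPolynomial.homogeneousSubmodule (Fin (n' + 1)) F d ⊓
          LinearMap.ker (MvPolynomial.aeval (R := F) (S₁ := E) P').toLinearMap) =
        (n' + d).choose n' - r) :
    ∃ P : Fin (n + 1) → E, P ≠ 0 ∧
      Module.finrank F
        ↥(MvPolynomial.homogeneousSubmodule (Fin (n + 1)) F d ⊓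
          LinearMap.ker (MvPolynomial.aeval (R := F) (S₁ := E) P).toLinearMap) =
        (n + d).choose n - r := by
  have : FiniteDimensional F E := Module.finite_of_finrank_pos (by omega)
  let ι : Fin (n' + 1) → Fin (n + 1) := Fin.castLE (by omega)
  let P := Function.extend ι P' 0
  have hP : P ∘ ι = P' := Function.extend_comp (Fin.castLE_injective _) P' 0
  have hm : (n' + d).choose n' ≤ (n + d).choose n := by
    rw [Nat.choose_symm_add, Nat.choose_symm_add]
    exact Nat.choose_le_choose d (by omega)
  refine ⟨P, fun hP0 => hP' (by rw [← hP, hP0]; rfl), ?_⟩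
  rw [← MvPolynomial.finrank_homogeneousSubmodule_fin (R := F), ← hE] at h ⊢
  rw [MvPolynomial.finrank_homogeneousSubmodule_inf_ker_aeval_eq_iff
    (by rw [MvPolynomial.finrank_homogeneousSubmodule_fin]; omega), ← hP] at h
  rw [MvPolynomial.finrank_homogeneousSubmodule_inf_ker_aeval_eq_iff
    (by rw [MvPolynomial.finrank_homogeneousSubmodule_fin]; omega)]
  exact MvPolynomial.surjective_homogeneousEval_of_comp ι h

/-- **Lemma (reduction in the dimension `n`).** Let `q` be a prime power, `F = F_q`,
`E = F_{q^r}` and `n ≥ n' ≥ 1`, `d ≥ 1`, `1 ≤ r ≤ m' = (n'+d).choose n'` integers,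
`m = (n+d).choose n`. If there is a point `P' ∈ ℙ^{n'}(E)` with
`dim_F {f ∈ S_{n',d}(F) : f(P') = 0} = m' − r`, then there is a point `P ∈ ℙⁿ(E)` with
`dim_F {f ∈ S_{n,d}(F) : f(P) = 0} = m − r`. -/
theorem stmt8 (q : ℕ) (hq : IsPrimePow q) (F E : Type*) [Field F] [Fintype F]
    (hF : Fintype.card F = q) [Field E] [Algebra F E]
    (n n' d r : ℕ) (hn' : 1 ≤ n') (hnn : n' ≤ n) (hd : 1 ≤ d)
    (hr1 : 1 ≤ r) (hrm : r ≤ (n' + d).choose n') (hE : Module.finrank F E = r)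
    (P' : Fin (n' + 1) → E) (hP' : P' ≠ 0)
    (h : Module.finrank F
        ↥(MvPolynomial.homogeneousSubmodule (Fin (n' + 1)) F d ⊓
          LinearMap.ker (MvPolynomial.aeval (R := F) (S₁ := E) P').toLinearMap) =
        (n' + d).choose n' - r) :
    ∃ P : Fin (n + 1) → E, P ≠ 0 ∧
      Module.finrank F
        ↥(MvPolynomial.homogeneousSubmodule (Fin (n + 1)) F d ⊓
          LinearMap.ker (MvPolynomial.aeval (R := F) (S₁ := E) P).toLinearMap) =
        (n + d).choose n - r :=
  stmt8_general F E n n' d r hnn hr1 hrm hE P' hP' h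
end

section
/- Let k ≥ 1 and let f_1, …, f_k, g_1, …, g_k be polynomials with real coefficients. Let M be a real number, let t_0 ≤ z be integers, and let q_0 > 1 be an integer. Define f(q, t) = Σ_{i=1}^{k} f_i(t)·q^{−g_i(t)} for real q > 1 and real t. Suppose: (i) f_i(t) ≥ 0 and g_i(t) ≥ 0 for every integer t ≥ t_0 and every 1 ≤ i ≤ k; (ii) f_i(x)·g_i'(x)·log(q_0) ≥ f_i'(x) for every real x ≥ z and every 1 ≤ i ≤ k; (iii) f(q_0, t) < M for every integer t with t_0 ≤ t ≤ z. Then f(q, t) < M for every integer t ≥ t_0 and every real q ≥ q_0. -/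
open Polynomial

/-! Along the integers `t ≥ t₀` the terms only shrink when `q₀` is replaced by a larger `q`,
since `f_i(t), g_i(t) ≥ 0`. For the fixed base `q₀`, the derivative of `f_i(x) q₀^{-g_i(x)}` is
`(f_i' - f_i g_i' log q₀) q₀^{-g_i}`, which hypothesis (ii) makes nonpositive on `[z, ∞)`; so
`f(q₀, ·)` is antitone there, and its values at integers `t > z` are bounded by `f(q₀, z) < M`. -/

open Set Real

theorem HasDerivAt.mul_rpow_neg {u v : ℝ → ℝ} {u' v' b x : ℝ} (hb : 0 < b)
    (hu : HasDerivAt u u' x) (hv : HasDerivAt v v' x) :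
    HasDerivAt (fun y => u y * b ^ (-v y)) ((u' - u x * v' * Real.log b) * b ^ (-v x)) x :=
  (hu.fun_mul (hv.fun_neg.const_rpow hb)).congr_deriv (by ring)

theorem antitoneOn_sum_mul_rpow_neg {ι : Type*} (s : Finset ι) (f g : ι → ℝ[X]) {b z : ℝ}
    (hb : 0 < b)
    (h : ∀ x, z ≤ x → ∀ i ∈ s,
      (derivative (f i)).eval x ≤ (f i).eval x * (derivative (g i)).eval x * log b) :
    AntitoneOn (fun x => ∑ i ∈ s, (f i).eval x * b ^ (-(g i).eval x)) (Ici z) := by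
  have hderiv : ∀ x, HasDerivAt (fun x => ∑ i ∈ s, (f i).eval x * b ^ (-(g i).eval x))
      (∑ i ∈ s, ((derivative (f i)).eval x - (f i).eval x * (derivative (g i)).eval x * log b)
        * b ^ (-(g i).eval x)) x := fun x =>
    HasDerivAt.fun_sum fun i _ => .mul_rpow_neg hb ((f i).hasDerivAt x) ((g i).hasDerivAt x)
  refine antitoneOn_of_hasDerivWithinAt_nonpos (convex_Ici z)
    (continuous_iff_continuousAt.2 fun x => (hderiv x).continuousAt).continuousOn
    (fun x _ => (hderiv x).hasDerivWithinAt) fun x hx => ?_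
  rw [interior_Ici] at hx
  exact Finset.sum_nonpos fun i hi =>
    mul_nonpos_of_nonpos_of_nonneg (sub_nonpos.2 (h x hx.le i hi)) (rpow_nonneg hb.le _)

theorem sum_mul_rpow_neg_le_of_le {ι : Type*} (s : Finset ι) {a e : ι → ℝ} {b c : ℝ}
    (ha : ∀ i ∈ s, 0 ≤ a i) (he : ∀ i ∈ s, 0 ≤ e i) (hb : 0 < b) (hbc : b ≤ c) :
    ∑ i ∈ s, a i * c ^ (-e i) ≤ ∑ i ∈ s, a i * b ^ (-e i) :=
  Finset.sum_le_sum fun i hi =>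
    mul_le_mul_of_nonneg_left (rpow_le_rpow_of_nonpos hb hbc (neg_nonpos.2 (he i hi))) (ha i hi)

theorem Int.lt_of_antitoneOn_Ici {F : ℝ → ℝ} {M : ℝ} {t₀ z : ℤ} (htz : t₀ ≤ z)
    (hF : AntitoneOn F (Ici (z : ℝ))) (hM : ∀ t : ℤ, t₀ ≤ t → t ≤ z → F t < M)
    {t : ℤ} (ht : t₀ ≤ t) : F t < M := by
  rcases le_or_gt t z with htz' | hzt
  · exact hM t ht htz'
  · have hzt' : (z : ℝ) ≤ t := by exact_mod_cast hzt.le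
    exact (hF self_mem_Ici hzt' hzt').trans_lt (hM z htz le_rfl)

theorem stmt9_general (k : ℕ) (f g : Fin k → Polynomial ℝ) (M : ℝ)
    (t0 z q0 : ℤ) (htz : t0 ≤ z) (hq0 : 1 < q0)
    (h1 : ∀ t : ℤ, t0 ≤ t → ∀ i, 0 ≤ (f i).eval (t : ℝ) ∧ 0 ≤ (g i).eval (t : ℝ))
    (h2 : ∀ x : ℝ, (z : ℝ) ≤ x → ∀ i,
      (derivative (f i)).eval x ≤
        (f i).eval x * (derivative (g i)).eval x * Real.log (q0 : ℝ))
    (h3 : ∀ t : ℤ, t0 ≤ t → t ≤ z →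
      (∑ i, (f i).eval (t : ℝ) * (q0 : ℝ) ^ (-(g i).eval (t : ℝ))) < M) :
    ∀ t : ℤ, t0 ≤ t → ∀ q : ℝ, (q0 : ℝ) ≤ q →
      (∑ i, (f i).eval (t : ℝ) * q ^ (-(g i).eval (t : ℝ))) < M := by
  intro t ht q hq
  have hq0pos : (0 : ℝ) < q0 := Int.cast_pos.2 (by omega)
  have hanti := antitoneOn_sum_mul_rpow_neg Finset.univ f g hq0pos fun x hx i _ => h2 x hx i
  calc (∑ i, (f i).eval (t : ℝ) * q ^ (-(g i).eval (t : ℝ)))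
      ≤ ∑ i, (f i).eval (t : ℝ) * (q0 : ℝ) ^ (-(g i).eval (t : ℝ)) :=
        sum_mul_rpow_neg_le_of_le _ (fun i _ => (h1 t ht i).1) (fun i _ => (h1 t ht i).2)
          hq0pos hq
    _ < M := Int.lt_of_antitoneOn_Ici htz hanti h3 ht

/-- **Lemma (a useful lemma from calculus).** Let `k ≥ 1`, `f_1,…,f_k, g_1,…,g_k` real
polynomials, `M ∈ ℝ`, `t_0 ≤ z` integers and `q_0 > 1` an integer. Define
`f(q,t) = Σ_i f_i(t)·q^{−g_i(t)}` (real powers). If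
(i) `f_i(t), g_i(t) ≥ 0` for all integers `t ≥ t_0`;
(ii) `f_i(x)·g_i'(x)·log q_0 ≥ f_i'(x)` for all real `x ≥ z`;
(iii) `f(q_0, t) < M` for all integers `t_0 ≤ t ≤ z`;
then `f(q,t) < M` for all integers `t ≥ t_0` and all real `q ≥ q_0`. -/
theorem stmt9 (k : ℕ) (hk : 1 ≤ k) (f g : Fin k → Polynomial ℝ) (M : ℝ)
    (t0 z q0 : ℤ) (htz : t0 ≤ z) (hq0 : 1 < q0)
    (h1 : ∀ t : ℤ, t0 ≤ t → ∀ i, 0 ≤ (f i).eval (t : ℝ) ∧ 0 ≤ (g i).eval (t : ℝ))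
    (h2 : ∀ x : ℝ, (z : ℝ) ≤ x → ∀ i,
      (derivative (f i)).eval x ≤
        (f i).eval x * (derivative (g i)).eval x * Real.log (q0 : ℝ))
    (h3 : ∀ t : ℤ, t0 ≤ t → t ≤ z →
      (∑ i, (f i).eval (t : ℝ) * (q0 : ℝ) ^ (-(g i).eval (t : ℝ))) < M) :
    ∀ t : ℤ, t0 ≤ t → ∀ q : ℝ, (q0 : ℝ) ≤ q →
      (∑ i, (f i).eval (t : ℝ) * q ^ (-(g i).eval (t : ℝ))) < M :=
  stmt9_general k f g M t0 z q0 htz hq0 h1 h2 h3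
end

section
/- Let q be a prime power and n ≥ 1, d ≥ 2 integers. The number of nonzero polynomials F ∈ S_{n,d}(F_q) that are reducible in F_q[x_0, …, x_n] (i.e., a product of two nonconstant polynomials), plus one, is at most Σ_{i=1}^{⌊d/2⌋} q^{binom(n+i, n) + binom(n+d−i, n)}. Equivalently, the proportion of reducible polynomials among all of S_{n,d}(F_q) is at most Σ_{i=1}^{⌊d/2⌋} q^{−N_i}, where N_i = binom(n+d, n) − binom(n+i, n) − binom(n+d−i, n). -/
/-!
If `f = a * b` is a nonzero form of degree `d`, then `a` and `b` are forms. Indeed,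
substituting `x ↦ t • x` turns `φ` into a polynomial in `t` whose coefficients are the
homogeneous components of `φ`; the form `f` becomes a monomial in `t`, and over a domain every
factor of a monomial has equal trailing and leading degree. Hence every reducible form, and
also `0 = 0 * 0`, lies in `⋃_{1 ≤ i ≤ d/2} S_i * S_{d-i}`, where `S_i` is the space of forms of
degree `i`, of size `q ^ binom(n+i, n)`. The `+ 1` accounts for `0`, which is not reducible.
-/

open Finset Pointwise

namespace Polynomial

variable {R : Type*} [Semiring R] {p q : R[X]}

theorem coeff_eq_zero_of_natTrailingDegree_eq_natDegree
    (h : p.natTrailingDegree = p.natDegree) {j : ℕ} (hj : j ≠ p.natDegree) : p.coeff j = 0 := by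
  rcases hj.lt_or_gt with hlt | hgt
  · exact coeff_eq_zero_of_lt_natTrailingDegree (h ▸ hlt)
  · exact coeff_eq_zero_of_natDegree_lt hgt

theorem natTrailingDegree_eq_natDegree_of_mul_eq_monomial [NoZeroDivisors R] {d : ℕ} {c : R}
    (hc : c ≠ 0) (h : p * q = monomial d c) : p.natTrailingDegree = p.natDegree := by
  have hpq : p * q ≠ 0 := by rwa [h, Ne, monomial_eq_zero_iff]
  have hp : p ≠ 0 := left_ne_zero_of_mul hpq
  have hq : q ≠ 0 := right_ne_zero_of_mul hpq
  have hdeg := natDegree_mul hp hq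
  have htrail := natTrailingDegree_mul hp hq
  rw [h, natDegree_monomial_eq d hc] at hdeg
  rw [h, natTrailingDegree_monomial hc] at htrail
  have := natTrailingDegree_le_natDegree p
  have := natTrailingDegree_le_natDegree q
  omega

end Polynomial

theorem Set.ncard_mul_le {M : Type*} [Mul M] {s t : Set M} (hs : s.Finite)
    (ht : t.Finite) : (s * t).ncard ≤ s.ncard * t.ncard := by
  rw [← image2_mul, ← image_uncurry_prod, ← ncard_prod]
  exact ncard_image_le (hs.prod ht)

theorem Finsupp.setOf_degree_eq_finsuppAntidiag (σ : Type*) [Fintype σ] [DecidableEq σ]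
    (k : ℕ) : {μ : σ →₀ ℕ | μ.degree = k} = ↑(univ.finsuppAntidiag k : Finset (σ →₀ ℕ)) := by
  ext μ
  simp [mem_finsuppAntidiag, Finsupp.degree_eq_sum]

namespace MvPolynomial

section Factorization

variable {σ R : Type*} [CommSemiring R]

theorem isHomogeneous_iff_forall_homogeneousComponent_eq_zero {φ : MvPolynomial σ R} {k : ℕ} :
    φ.IsHomogeneous k ↔ ∀ j ≠ k, homogeneousComponent j φ = 0 := by
  refine ⟨fun h j hj => by rw [homogeneousComponent_of_mem h, if_neg hj], fun h => ?_⟩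
  suffices homogeneousComponent k φ = φ from this ▸ homogeneousComponent_isHomogeneous k φ
  ext m
  rw [coeff_homogeneousComponent]
  split_ifs with hm
  · rfl
  · have := coeff_homogeneousComponent (n := m.degree) (φ := φ) m
    rwa [if_pos rfl, h _ hm, coeff_zero] at this

/-- `φ ↦ φ(t • x)`, a polynomial in `t` with coefficients in `MvPolynomial σ R`. -/
noncomputable def homogeneousExpansion (σ R : Type*) [CommSemiring R] :
    MvPolynomial σ R →ₐ[R] Polynomial (MvPolynomial σ R) :=
  aeval fun i => Polynomial.C (X i) * Polynomial.X

theorem homogeneousExpansion_monomial (m : σ →₀ ℕ) (c : R) :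
    homogeneousExpansion σ R (monomial m c) = Polynomial.monomial m.degree (monomial m c) := by
  rw [homogeneousExpansion, aeval_monomial, Finsupp.prod, Finsupp.degree_apply]
  simp_rw [mul_pow, ← Polynomial.C_pow]
  rw [prod_mul_distrib, prod_pow_eq_pow_sum, ← map_prod, ← mul_assoc,
    ← Polynomial.C_mul_X_pow_eq_monomial, monomial_eq, Finsupp.prod, map_mul]
  rfl

theorem coeff_homogeneousExpansion (φ : MvPolynomial σ R) (k : ℕ) :
    (homogeneousExpansion σ R φ).coeff k = homogeneousComponent k φ := by
  induction φ using induction_on' with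
  | monomial m c =>
    rw [homogeneousExpansion_monomial, Polynomial.coeff_monomial,
      homogeneousComponent_of_mem (isHomogeneous_monomial c rfl)]
    exact if_congr eq_comm rfl rfl
  | add p q hp hq => rw [map_add, Polynomial.coeff_add, hp, hq, map_add]

theorem IsHomogeneous.homogeneousExpansion_eq {φ : MvPolynomial σ R} {k : ℕ}
    (h : φ.IsHomogeneous k) : homogeneousExpansion σ R φ = Polynomial.monomial k φ := by
  ext1 j
  rw [coeff_homogeneousExpansion, homogeneousComponent_of_mem h, Polynomial.coeff_monomial]
  exact if_congr eq_comm rfl rfl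

variable [NoZeroDivisors R]

theorem IsHomogeneous.of_mul_eq_left {f a b : MvPolynomial σ R} {d : ℕ}
    (hf : f.IsHomogeneous d) (h0 : f ≠ 0) (h : a * b = f) : a.IsHomogeneous a.totalDegree := by
  have hmul : homogeneousExpansion σ R a * homogeneousExpansion σ R b =
      Polynomial.monomial d f := by
    rw [← map_mul, h, hf.homogeneousExpansion_eq]
  have htrail := Polynomial.natTrailingDegree_eq_natDegree_of_mul_eq_monomial h0 hmul
  have hk : a.IsHomogeneous (homogeneousExpansion σ R a).natDegree :=
    isHomogeneous_iff_forall_homogeneousComponent_eq_zero.mpr fun j hj => by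
      rw [← coeff_homogeneousExpansion]
      exact Polynomial.coeff_eq_zero_of_natTrailingDegree_eq_natDegree htrail hj
  rwa [hk.totalDegree (left_ne_zero_of_mul (h ▸ h0))]

theorem exists_mem_homogeneousSubmodule_mul_of_eq_mul {f a b : MvPolynomial σ R} {d : ℕ}
    (hf : f.IsHomogeneous d) (h0 : f ≠ 0) (ha : 0 < a.totalDegree) (hb : 0 < b.totalDegree)
    (h : f = a * b) :
    ∃ i ∈ Icc 1 (d / 2), f ∈ (homogeneousSubmodule σ R i : Set (MvPolynomial σ R)) *
      homogeneousSubmodule σ R (d - i) := by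
  have hA := hf.of_mul_eq_left h0 h.symm
  have hB := hf.of_mul_eq_left h0 (h.trans (mul_comm a b)).symm
  have hsum : a.totalDegree + b.totalDegree = d := by
    rw [← totalDegree_mul_of_isDomain (left_ne_zero_of_mul (h ▸ h0))
      (right_ne_zero_of_mul (h ▸ h0)), ← h, hf.totalDegree h0]
  rcases le_total a.totalDegree b.totalDegree with hle | hle
  · refine ⟨a.totalDegree, mem_Icc.2 ⟨ha, by omega⟩, Set.mem_mul.2 ⟨a, hA, b, ?_, h.symm⟩⟩
    rwa [show d - a.totalDegree = b.totalDegree by omega]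
  · refine ⟨b.totalDegree, mem_Icc.2 ⟨hb, by omega⟩, Set.mem_mul.2 ⟨b, hB, a, ?_, ?_⟩⟩
    · rwa [show d - b.totalDegree = a.totalDegree by omega]
    · rw [h, mul_comm]

end Factorization

section Counting

variable {σ R : Type*} [Fintype σ] [CommSemiring R] [Fintype R]

theorem ncard_homogeneousSubmodule (k : ℕ) :
    (homogeneousSubmodule σ R k : Set (MvPolynomial σ R)).ncard =
      Fintype.card R ^ (Fintype.card σ + k - 1).choose k := by
  classical
  rw [← Nat.card_coe_set_eq, SetLike.coe_sort_coe, homogeneousSubmodule_eq_finsupp_supported,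
    Finsupp.setOf_degree_eq_finsuppAntidiag,
    Nat.card_congr (AddMonoidAlgebra.supportedEquivFinsupp _).toEquiv,
    Nat.card_congr Finsupp.equivFunOnFinite, Nat.card_fun, Nat.card_coe_set_eq,
    Set.ncard_coe_finset, card_finsuppAntidiag_nat_eq_choose, card_univ, Nat.card_eq_fintype_card]

theorem finite_homogeneousSubmodule (k : ℕ) :
    (homogeneousSubmodule σ R k : Set (MvPolynomial σ R)).Finite :=
  Set.finite_of_ncard_ne_zero <| by rw [ncard_homogeneousSubmodule]; positivity

end Counting

end MvPolynomial

open MvPolynomial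

theorem stmt11_general (q : ℕ) (F : Type*) [Field F] [Fintype F]
    (hF : Fintype.card F = q) (n d : ℕ) (hd : 2 ≤ d) :
    Nat.card {f : MvPolynomial (Fin (n + 1)) F //
        f ∈ MvPolynomial.homogeneousSubmodule (Fin (n + 1)) F d ∧ f ≠ 0 ∧
        ∃ a b : MvPolynomial (Fin (n + 1)) F,
          0 < a.totalDegree ∧ 0 < b.totalDegree ∧ f = a * b} + 1 ≤
      ∑ i ∈ Finset.Icc 1 (d / 2), q ^ ((n + i).choose n + (n + d - i).choose n) := by
  set H : ℕ → Set (MvPolynomial (Fin (n + 1)) F) :=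
    fun i => homogeneousSubmodule (Fin (n + 1)) F i
  have hfin (i : ℕ) : (H i).Finite := finite_homogeneousSubmodule i
  have hcard (i : ℕ) : (H i).ncard = q ^ (n + i).choose n := by
    rw [ncard_homogeneousSubmodule, Fintype.card_fin, hF, add_right_comm, Nat.add_sub_cancel,
      Nat.choose_symm_add]
  set reducibleForms := {f | f ∈ H d ∧ f ≠ 0 ∧ ∃ a b : MvPolynomial (Fin (n + 1)) F,
    0 < a.totalDegree ∧ 0 < b.totalDegree ∧ f = a * b}
  have hsub : insert 0 reducibleForms ⊆ ⋃ i ∈ Icc 1 (d / 2), H i * H (d - i) := by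
    rintro f (rfl | ⟨hf, h0, a, b, ha, hb, hab⟩)
    · exact Set.mem_biUnion (mem_Icc.2 ⟨le_rfl, by omega⟩)
        (Set.mem_mul.2 ⟨0, zero_mem _, 0, zero_mem _, mul_zero 0⟩)
    · obtain ⟨i, hi, hmem⟩ := exists_mem_homogeneousSubmodule_mul_of_eq_mul hf h0 ha hb hab
      exact Set.mem_biUnion hi hmem
  calc Nat.card reducibleForms + 1 = (insert 0 reducibleForms).ncard := by
        rw [Nat.card_coe_set_eq, Set.ncard_insert_of_notMem (fun h => h.2.1 rfl)
          ((hfin d).subset fun f hf => hf.1)]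
    _ ≤ (⋃ i ∈ Icc 1 (d / 2), H i * H (d - i)).ncard :=
        Set.ncard_le_ncard hsub <| (finite_toSet _).biUnion fun i _ => (hfin i).mul (hfin (d - i))
    _ ≤ ∑ i ∈ Icc 1 (d / 2), (H i * H (d - i)).ncard := set_ncard_biUnion_le _ _
    _ ≤ ∑ i ∈ Icc 1 (d / 2), (H i).ncard * (H (d - i)).ncard :=
        sum_le_sum fun i _ => Set.ncard_mul_le (hfin i) (hfin (d - i))
    _ = ∑ i ∈ Icc 1 (d / 2), q ^ ((n + i).choose n + (n + d - i).choose n) :=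
        sum_congr rfl fun i hi => by
          rw [hcard, hcard, ← pow_add,
            Nat.add_sub_assoc ((mem_Icc.1 hi).2.trans (Nat.div_le_self d 2))]

/-- **Bound on the number of reducible degree-`d` forms.** Let `q` be a prime power,
`F = F_q`, `n ≥ 1`, `d ≥ 2`. The number of nonzero homogeneous polynomials of degree `d`
in `n+1` variables over `F` that are reducible (a product of two nonconstant polynomials),
plus one, is at most `Σ_{i=1}^{⌊d/2⌋} q^{binom(n+i,n) + binom(n+d−i,n)}`. -/
theorem stmt11 (q : ℕ) (hq : IsPrimePow q) (F : Type*) [Field F] [Fintype F]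
    (hF : Fintype.card F = q) (n d : ℕ) (hn : 1 ≤ n) (hd : 2 ≤ d) :
    Nat.card {f : MvPolynomial (Fin (n + 1)) F //
        f ∈ MvPolynomial.homogeneousSubmodule (Fin (n + 1)) F d ∧ f ≠ 0 ∧
        ∃ a b : MvPolynomial (Fin (n + 1)) F,
          0 < a.totalDegree ∧ 0 < b.totalDegree ∧ f = a * b} + 1 ≤
      ∑ i ∈ Finset.Icc 1 (d / 2), q ^ ((n + i).choose n + (n + d - i).choose n) :=
  stmt11_general q F hF n d hd
end

section
/- Let q be a prime power and n, d integers with either (n ≥ 3 and d ≥ 2) or (n = 2 and d ≥ 7), and set m = binom(n+d, n). Let R denote the number of nonzero F ∈ S_{n,d}(F_q) that are reducible in F_q[x_0, …, x_n], and let t = R/(q^m − 1). Then t·(d − 1) ≤ 1/(2q); equivalently, 2q(d−1)·R ≤ q^m − 1. -/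
/-!
Factors of a homogeneous polynomial over a domain are homogeneous (compare the top and bottom
degrees in `t` of `p (t • x)`), so a nonzero reducible form of degree `d` is a product of nonzero
forms of degrees `e` and `d - e` with `1 ≤ e ≤ d / 2`. Writing `M e = (n + e).choose n`, this gives
`R ≤ ∑ e, q ^ (M e + M (d - e))`. By convexity of `M` the exponents decrease strictly in `e`, so
the sum is at most twice its first term, and `M d - M 1 - M (d - 1)` is large enough to absorb
the factor `2q(d - 1)`. For `n = 2` this gap is only `d - 2`, and the terms `e ≥ 2` must be bounded
separately, using that their exponents are at least `d - 3` below the first.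
-/

namespace Nat

theorem card_subtype_ne {α : Type*} [Finite α] (a : α) :
    Nat.card {x // x ≠ a} = Nat.card α - 1 := by
  classical
  have := Fintype.ofFinite α
  simp [Nat.card_eq_fintype_card, Fintype.card_subtype_compl]

theorem multichoose_succ_eq_choose (n k : ℕ) : (n + 1).multichoose k = (n + k).choose n := by
  rw [Nat.multichoose_eq, Nat.add_right_comm, Nat.add_sub_cancel, Nat.choose_symm_add]

theorem add_succ_choose_self {n : ℕ} (hn : 1 ≤ n) (e : ℕ) :
    (n + (e + 1)).choose n = (n + e).choose n + (n + e).choose (n - 1) := by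
  rw [← Nat.add_assoc, Nat.choose_succ_left _ _ (by omega), Nat.add_comm]

theorem add_succ_choose_pred {n : ℕ} (hn : 2 ≤ n) (e : ℕ) :
    (n + (e + 1)).choose (n - 1) = (n + e).choose (n - 1) + (n + e).choose (n - 2) := by
  rw [← Nat.add_assoc, Nat.choose_succ_left _ _ (by omega), Nat.add_comm, Nat.sub_sub]

theorem add_choose_pred_add_mul_le {n a b : ℕ} (hn : 2 ≤ n) (hab : a ≤ b) :
    (n + a).choose (n - 1) + (b - a) * n.choose 2 ≤ (n + b).choose (n - 1) := by
  induction b, hab using Nat.le_induction with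
  | base => simp
  | succ b hab ih =>
    have h2 : n.choose 2 ≤ (n + b).choose (n - 2) := by
      rw [← Nat.choose_symm hn]
      exact Nat.choose_le_choose _ (Nat.le_add_right n b)
    rw [add_succ_choose_pred hn, Nat.sub_add_comm hab, Nat.succ_mul]
    omega

theorem add_choose_convex {n a b : ℕ} (hn : 2 ≤ n) (hab : a ≤ b) :
    (n + (a + 1)).choose n + (n + b).choose n + (b - a) * n.choose 2 ≤
      (n + a).choose n + (n + (b + 1)).choose n := by
  rw [add_succ_choose_self (by omega), add_succ_choose_self (by omega)]
  have := add_choose_pred_add_mul_le hn hab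
  omega

theorem add_succ_choose_add_add_sub_succ_choose_le {n d e : ℕ} (hn : 2 ≤ n) (he : 2 * e + 2 ≤ d) :
    (n + (e + 1)).choose n + (n + (d - (e + 1))).choose n + (d - (2 * e + 1)) * n.choose 2 ≤
      (n + e).choose n + (n + (d - e)).choose n := by
  have := add_choose_convex hn (a := e) (b := d - (e + 1)) (by omega)
  rwa [show d - (e + 1) + 1 = d - e by omega, show d - (e + 1) - e = d - (2 * e + 1) by omega]
    at this

theorem succ_choose_add_add_sub_one_choose_le {n d : ℕ} (hn : 2 ≤ n) (hd : 1 ≤ d) :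
    (n + 1).choose n + (n + (d - 1)).choose n + (d - 1) * n.choose 2 ≤ (n + d).choose n + 1 := by
  have := add_choose_convex hn (a := 0) (b := d - 1) (Nat.zero_le _)
  simp only [Nat.add_zero, Nat.zero_add, Nat.choose_self, Nat.sub_zero, Nat.sub_add_cancel hd]
    at this
  omega

end Nat

namespace MvPolynomial

variable {σ R : Type*}

section CommSemiring

variable [CommSemiring R]

/-- `p (t • x)`, as a polynomial in `t` with coefficients in `MvPolynomial σ R`. -/
noncomputable def scaleVars : MvPolynomial σ R →ₐ[R] Polynomial (MvPolynomial σ R) :=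
  aeval fun i => Polynomial.C (X i) * Polynomial.X

instance [Finite σ] (k : ℕ) : Module.Finite R (homogeneousSubmodule σ R k) :=
  Module.Finite.iff_fg.mpr (homogeneousSubmodule_fg σ R k)

theorem scaleVars_monomial (s : σ →₀ ℕ) (c : R) :
    scaleVars (monomial s c) = Polynomial.monomial s.degree (monomial s c) := by
  simp only [scaleVars, aeval_monomial, mul_pow, Finsupp.prod, Finset.prod_mul_distrib,
    ← map_pow, ← map_prod, Finset.prod_pow_eq_pow_sum, Polynomial.algebraMap_apply]
  rw [Finsupp.degree_apply, ← Polynomial.C_mul_X_pow_eq_monomial, ← mul_assoc, ← map_mul,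
    monomial_eq, Finsupp.prod, algebraMap_eq]

theorem coeff_scaleVars (p : MvPolynomial σ R) (j : ℕ) :
    (scaleVars p).coeff j = homogeneousComponent j p := by
  induction p using MvPolynomial.induction_on' with
  | monomial s c =>
    rw [scaleVars_monomial, Polynomial.coeff_monomial,
      homogeneousComponent_of_mem (isHomogeneous_monomial c rfl)]
    simp only [eq_comm]
  | add p q hp hq => rw [map_add, Polynomial.coeff_add, hp, hq, map_add]

theorem IsHomogeneous.scaleVars_eq {p : MvPolynomial σ R} {k : ℕ} (hp : p.IsHomogeneous k) :
    scaleVars p = Polynomial.monomial k p := by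
  ext j : 1
  rw [coeff_scaleVars, Polynomial.coeff_monomial, homogeneousComponent_of_mem hp]
  simp only [eq_comm]

theorem isHomogeneous_of_homogeneousComponent_eq_zero {p : MvPolynomial σ R} {k : ℕ}
    (h : ∀ j ≠ k, homogeneousComponent j p = 0) : p.IsHomogeneous k := by
  have hp : homogeneousComponent k p = p := by
    conv_rhs => rw [← sum_homogeneousComponent p]
    refine (Finset.sum_eq_single k (fun j _ hj => h j hj) fun hk => ?_).symm
    exact homogeneousComponent_eq_zero _ _ (by simpa using hk)
  exact hp ▸ homogeneousComponent_isHomogeneous k p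

theorem isHomogeneous_natDegree_scaleVars {p : MvPolynomial σ R}
    (h : (scaleVars p).natTrailingDegree = (scaleVars p).natDegree) :
    p.IsHomogeneous (scaleVars p).natDegree := by
  refine isHomogeneous_of_homogeneousComponent_eq_zero fun j hj => ?_
  rw [← coeff_scaleVars]
  rcases hj.lt_or_gt with hlt | hgt
  · exact Polynomial.coeff_eq_zero_of_lt_natTrailingDegree (h ▸ hlt)
  · exact Polynomial.coeff_eq_zero_of_natDegree_lt hgt

end CommSemiring

section IsDomain

variable [CommRing R] [IsDomain R]

theorem IsHomogeneous.of_mul_left {a b : MvPolynomial σ R} {n : ℕ}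
    (h : (a * b).IsHomogeneous n) (hab : a * b ≠ 0) : a.IsHomogeneous a.totalDegree := by
  have hprod : scaleVars a * scaleVars b = Polynomial.monomial n (a * b) := by
    rw [← map_mul, h.scaleVars_eq]
  have hne : scaleVars a * scaleVars b ≠ 0 := by
    rwa [hprod, Ne, Polynomial.monomial_eq_zero_iff]
  have hA := left_ne_zero_of_mul hne
  have hB := right_ne_zero_of_mul hne
  have hdeg := Polynomial.natDegree_mul hA hB
  have htr := Polynomial.natTrailingDegree_mul hA hB
  rw [hprod, Polynomial.natDegree_monomial_eq _ hab] at hdeg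
  rw [hprod, Polynomial.natTrailingDegree_monomial hab] at htr
  have hA' := Polynomial.natTrailingDegree_le_natDegree (p := scaleVars a)
  have hB' := Polynomial.natTrailingDegree_le_natDegree (p := scaleVars b)
  have ha := isHomogeneous_natDegree_scaleVars (p := a) (by omega)
  rwa [ha.totalDegree (left_ne_zero_of_mul hab)]

theorem IsHomogeneous.exists_factorization {f a b : MvPolynomial σ R} {d : ℕ}
    (hf : f.IsHomogeneous d) (hf0 : f ≠ 0) (hab : f = a * b) (ha : 0 < a.totalDegree)
    (hb : 0 < b.totalDegree) :
    ∃ e ∈ Finset.Icc 1 (d / 2), ∃ a' b' : MvPolynomial σ R,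
      a'.IsHomogeneous e ∧ a' ≠ 0 ∧ b'.IsHomogeneous (d - e) ∧ b' ≠ 0 ∧ f = a' * b' := by
  wlog hle : a.totalDegree ≤ b.totalDegree generalizing a b
  · exact this (b := a) (hab.trans (mul_comm a b)) hb ha (by omega)
  subst hab
  have ha0 := left_ne_zero_of_mul hf0
  have hb0 := right_ne_zero_of_mul hf0
  have hdeg : a.totalDegree + b.totalDegree = d := by
    rw [← totalDegree_mul_of_isDomain ha0 hb0, hf.totalDegree hf0]
  have hb' : b.IsHomogeneous (d - a.totalDegree) := by
    rw [← hdeg, Nat.add_sub_cancel_left]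
    exact (mul_comm a b ▸ hf).of_mul_left (mul_comm a b ▸ hf0)
  exact ⟨a.totalDegree, Finset.mem_Icc.2 ⟨ha, by omega⟩, a, b, hf.of_mul_left hf0, ha0, hb', hb0,
    rfl⟩

end IsDomain

section FiniteField

variable (F : Type*) [Field F]

theorem finrank_homogeneousSubmodule_s12 [Fintype σ] (k : ℕ) :
    Module.finrank F (homogeneousSubmodule σ F k) = (Fintype.card σ).multichoose k := by
  classical
  have hS : {s : σ →₀ ℕ | s.degree = k} = ↑((Finset.univ : Finset σ).finsuppAntidiag k) := by
    ext s
    simp [Finset.mem_finsuppAntidiag, Finsupp.degree_eq_sum]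
  rw [homogeneousSubmodule_eq_finsupp_supported, ← restrictSupport,
    Module.finrank_eq_nat_card_basis (basisRestrictSupport F _), hS, Nat.card_coe_set_eq,
    Set.ncard_coe_finset, Finset.card_finsuppAntidiag_nat_eq_multichoose, Finset.card_univ]

theorem natCard_homogeneousSubmodule [Fintype σ] (k : ℕ) :
    Nat.card (homogeneousSubmodule σ F k) = Nat.card F ^ (Fintype.card σ).multichoose k := by
  rw [Module.natCard_eq_pow_finrank (K := F), finrank_homogeneousSubmodule_s12]

theorem natCard_reducible_le [Fintype σ] [Finite F] (d : ℕ) :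
    Nat.card {f : MvPolynomial σ F // f ∈ homogeneousSubmodule σ F d ∧ f ≠ 0 ∧
        ∃ a b : MvPolynomial σ F, 0 < a.totalDegree ∧ 0 < b.totalDegree ∧ f = a * b} ≤
      ∑ e ∈ Finset.Icc 1 (d / 2), (Nat.card F ^ (Fintype.card σ).multichoose e - 1) *
        (Nat.card F ^ (Fintype.card σ).multichoose (d - e) - 1) := by
  let μ : (Σ e : Finset.Icc 1 (d / 2), {x : homogeneousSubmodule σ F e // x ≠ 0} ×
      {y : homogeneousSubmodule σ F (d - e) // y ≠ 0}) → MvPolynomial σ F :=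
    fun ⟨_, x, y⟩ => x.1 * y.1
  have hsub : {f : MvPolynomial σ F | f ∈ homogeneousSubmodule σ F d ∧ f ≠ 0 ∧
      ∃ a b : MvPolynomial σ F, 0 < a.totalDegree ∧ 0 < b.totalDegree ∧ f = a * b} ⊆
        Set.range μ := by
    rintro f ⟨hf, hf0, a, b, ha, hb, hab⟩
    obtain ⟨e, he, a', b', ha', ha0, hb', hb0, rfl⟩ := hf.exists_factorization hf0 hab ha hb
    exact ⟨⟨⟨e, he⟩, ⟨⟨a', ha'⟩, fun h => ha0 congr($h.1)⟩, ⟨⟨b', hb'⟩, fun h => hb0 congr($h.1)⟩⟩,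
      rfl⟩
  have : ∀ k, Finite (homogeneousSubmodule σ F k) := fun _ => Module.finite_of_finite F
  refine (Nat.card_mono (Set.finite_range μ) hsub).trans ((Finite.card_range_le μ).trans ?_)
  rw [Nat.card_sigma, ← Finset.sum_coe_sort (Finset.Icc 1 (d / 2))]
  simp only [Nat.card_prod, Nat.card_subtype_ne, natCard_homogeneousSubmodule, le_refl]

end FiniteField

end MvPolynomial

theorem sum_Icc_pow_lt {q : ℕ} (hq : 2 ≤ q) {s : ℕ → ℕ} {a b : ℕ}
    (hs : ∀ e, a ≤ e → e < b → s (e + 1) < s e) :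
    ∑ e ∈ Finset.Icc a b, q ^ s e < 2 * q ^ s a := by
  rcases lt_or_ge b a with hba | hab
  · simp [Finset.Icc_eq_empty_of_lt hba, pow_pos (by omega : 0 < q)]
  suffices ∑ e ∈ Finset.Icc a b, q ^ s e + q ^ s b ≤ 2 * q ^ s a by
    have := pow_pos (by omega : 0 < q) (s b)
    omega
  induction b, hab using Nat.le_induction with
  | base => simp [two_mul]
  | succ b hab ih =>
    have hstep : 2 * q ^ s (b + 1) ≤ q ^ s b :=
      calc 2 * q ^ s (b + 1) ≤ q * q ^ s (b + 1) := Nat.mul_le_mul_right _ hq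
        _ = q ^ (s (b + 1) + 1) := by ring
        _ ≤ q ^ s b := Nat.pow_le_pow_right (by omega) (hs b hab (by omega))
    rw [Finset.sum_Icc_succ_top (by omega)]
    have := ih fun e he1 he2 => hs e he1 (by omega)
    omega

theorem two_mul_pred_mul_pow_four_add_two_le {q d : ℕ} (hq : 2 ≤ q) (hd : 7 ≤ d) :
    2 * (d - 1) * (q ^ 4 + 2) ≤ q ^ (d + 1) := by
  have h16 : 16 ≤ q ^ 4 := by simpa using Nat.pow_le_pow_left hq 4
  induction d, hd using Nat.le_induction with
  | base =>
    have : q ^ (7 + 1) = q ^ 4 * q ^ 4 := by ring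
    rw [this]
    nlinarith
  | succ d hd ih =>
    have hq8 : q ^ 4 * q ^ 4 ≤ q ^ (d + 1) := by
      rw [← pow_add]; exact Nat.pow_le_pow_right (by omega) (by omega)
    have hsucc : q ^ (d + 1 + 1) = q * q ^ (d + 1) := by ring
    have hdouble : 2 * q ^ (d + 1) ≤ q * q ^ (d + 1) := Nat.mul_le_mul_right _ hq
    have hlhs : 2 * (d + 1 - 1) * (q ^ 4 + 2) = 2 * (d - 1) * (q ^ 4 + 2) + 2 * (q ^ 4 + 2) := by
      rw [show d + 1 - 1 = d - 1 + 1 by omega]; ring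
    nlinarith

theorem two_mul_mul_sum_pow_le_of_gap {q d M k : ℕ} {s : ℕ → ℕ} (hq : 2 ≤ q) (hd : 1 ≤ d)
    (hs : ∀ e, 1 ≤ e → e < k → s (e + 1) < s e) (hM : s 1 + d + 2 ≤ M) :
    2 * q * (d - 1) * ∑ e ∈ Finset.Icc 1 k, q ^ s e ≤ q ^ M := by
  have hsum := sum_Icc_pow_lt hq hs
  have h4 : 4 * (d - 1) ≤ q ^ (d + 1) :=
    calc 4 * (d - 1) ≤ 2 ^ 2 * 2 ^ (d - 1) := Nat.mul_le_mul_left _ Nat.lt_two_pow_self.le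
      _ = 2 ^ (d + 1) := by rw [← pow_add]; congr 1; omega
      _ ≤ q ^ (d + 1) := Nat.pow_le_pow_left hq _
  calc 2 * q * (d - 1) * ∑ e ∈ Finset.Icc 1 k, q ^ s e
      ≤ 2 * q * (d - 1) * (2 * q ^ s 1) := Nat.mul_le_mul_left _ hsum.le
    _ = 4 * (d - 1) * q ^ (s 1 + 1) := by ring
    _ ≤ q ^ (d + 1) * q ^ (s 1 + 1) := Nat.mul_le_mul_right _ h4
    _ = q ^ (s 1 + d + 2) := by rw [← pow_add]; congr 1; omega
    _ ≤ q ^ M := Nat.pow_le_pow_right (by omega) hM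

theorem two_mul_mul_sum_pow_le_of_gap_of_seven_le {q d M k : ℕ} {s : ℕ → ℕ} (hq : 2 ≤ q)
    (hd : 7 ≤ d) (hs : ∀ e, 1 ≤ e → e < k → s (e + 1) < s e) (h12 : s 2 + 4 ≤ s 1)
    (hM : s 1 + d ≤ M + 2) :
    2 * q * (d - 1) * ∑ e ∈ Finset.Icc 1 k, q ^ s e ≤ q ^ M := by
  rcases Nat.eq_zero_or_pos k with rfl | hk
  · simp
  obtain ⟨u, hu⟩ : ∃ u, s 1 = u + 4 := ⟨s 1 - 4, by omega⟩
  have htail : ∑ e ∈ Finset.Icc 2 k, q ^ s e < 2 * q ^ u :=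
    (sum_Icc_pow_lt hq fun e he1 he2 => hs e (by omega) he2).trans_le
      (Nat.mul_le_mul_left _ (Nat.pow_le_pow_right (by omega) (by omega)))
  have hsum : ∑ e ∈ Finset.Icc 1 k, q ^ s e ≤ (q ^ 4 + 2) * q ^ u := by
    rw [← Finset.add_sum_Ioc_eq_sum_Icc hk, ← Finset.Icc_add_one_left_eq_Ioc, hu]
    have : q ^ (u + 4) = q ^ 4 * q ^ u := by ring
    rw [this, add_mul]
    exact Nat.add_le_add_left htail.le _
  calc 2 * q * (d - 1) * ∑ e ∈ Finset.Icc 1 k, q ^ s e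
      ≤ 2 * q * (d - 1) * ((q ^ 4 + 2) * q ^ u) := Nat.mul_le_mul_left _ hsum
    _ = 2 * (d - 1) * (q ^ 4 + 2) * q ^ (u + 1) := by ring
    _ ≤ q ^ (d + 1) * q ^ (u + 1) :=
      Nat.mul_le_mul_right _ (two_mul_pred_mul_pow_four_add_two_le hq hd)
    _ = q ^ (s 1 + d - 2) := by rw [← pow_add]; congr 1; omega
    _ ≤ q ^ M := Nat.pow_le_pow_right (by omega) (by omega)

theorem two_mul_mul_sum_pow_choose_le {q n d : ℕ} (hq : 2 ≤ q)
    (h : (3 ≤ n ∧ 2 ≤ d) ∨ (n = 2 ∧ 7 ≤ d)) :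
    2 * q * (d - 1) * ∑ e ∈ Finset.Icc 1 (d / 2),
        q ^ ((n + e).choose n + (n + (d - e)).choose n) ≤ q ^ (n + d).choose n := by
  set s : ℕ → ℕ := fun e => (n + e).choose n + (n + (d - e)).choose n
  have hn : 2 ≤ n := by omega
  have hd : 2 ≤ d := by omega
  have hc : 0 < n.choose 2 := Nat.choose_pos hn
  have hdec : ∀ e, e < d / 2 → s (e + 1) + (d - (2 * e + 1)) * n.choose 2 ≤ s e :=
    fun e he => Nat.add_succ_choose_add_add_sub_succ_choose_le hn (by omega)
  have hs : ∀ e, 1 ≤ e → e < d / 2 → s (e + 1) < s e := fun e _ he => by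
    have := hdec e he
    have := Nat.mul_pos (Nat.sub_pos_of_lt (by omega : 2 * e + 1 < d)) hc
    omega
  have hgap : s 1 + (d - 1) * n.choose 2 ≤ (n + d).choose n + 1 :=
    Nat.succ_choose_add_add_sub_one_choose_le hn (by omega)
  rcases h with ⟨hn3, -⟩ | ⟨rfl, hd7⟩
  · have hc3 : 3 ≤ n.choose 2 := Nat.choose_le_choose 2 hn3
    rcases hd.eq_or_lt with rfl | hd3
    -- a single term, but a gap of only 2: too small to pay for the factor 2 of `sum_Icc_pow_lt`
    · have h2q : 2 * q ≤ q ^ 2 := by rw [sq]; exact Nat.mul_le_mul_right _ hq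
      calc 2 * q * (2 - 1) * ∑ e ∈ Finset.Icc 1 (2 / 2), q ^ s e
          = 2 * q * q ^ s 1 := by simp
        _ ≤ q ^ 2 * q ^ s 1 := Nat.mul_le_mul_right _ h2q
        _ = q ^ (s 1 + 2) := by ring
        _ ≤ q ^ (n + 2).choose n := Nat.pow_le_pow_right (by omega) (by omega)
    · have := Nat.mul_le_mul_left (d - 1) hc3
      exact two_mul_mul_sum_pow_le_of_gap (s := s) hq (by omega) hs (by omega)
  · have h12 : s 2 + (d - 3) ≤ s 1 := by simpa using hdec 1 (by omega)
    rw [Nat.choose_self, mul_one] at hgap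
    exact two_mul_mul_sum_pow_le_of_gap_of_seven_le (s := s) hq hd7 hs (by omega) (by omega)

theorem two_mul_mul_sum_pred_mul_pred_le {q n d : ℕ} (hq : 2 ≤ q)
    (h : (3 ≤ n ∧ 2 ≤ d) ∨ (n = 2 ∧ 7 ≤ d)) :
    2 * q * (d - 1) * ∑ e ∈ Finset.Icc 1 (d / 2),
        (q ^ (n + e).choose n - 1) * (q ^ (n + (d - e)).choose n - 1) ≤
      q ^ (n + d).choose n - 1 := by
  have hpos : ∀ k, 0 < q ^ k := fun k => pow_pos (by omega) k
  -- the sum is nonempty and each term drops by at least 1, which pays for the `- 1` on the right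
  have hlt : ∑ e ∈ Finset.Icc 1 (d / 2),
      (q ^ (n + e).choose n - 1) * (q ^ (n + (d - e)).choose n - 1) <
        ∑ e ∈ Finset.Icc 1 (d / 2), q ^ ((n + e).choose n + (n + (d - e)).choose n) := by
    refine Finset.sum_lt_sum_of_nonempty ⟨1, Finset.mem_Icc.2 ⟨le_rfl, by omega⟩⟩ fun e _ => ?_
    rw [pow_add]
    exact Nat.mul_lt_mul_of_lt_of_le (Nat.sub_lt (hpos _) one_pos) (Nat.sub_le _ _) (hpos _)
  have hA : 0 < 2 * q * (d - 1) := Nat.mul_pos (by omega) (by omega)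
  have hmul := Nat.mul_le_mul_left (2 * q * (d - 1)) hlt
  rw [Nat.mul_succ] at hmul
  have := two_mul_mul_sum_pow_choose_le hq h
  omega

theorem stmt12_general (q : ℕ) (F : Type*) [Field F] [Fintype F]
    (hF : Fintype.card F = q) (n d : ℕ)
    (h : (3 ≤ n ∧ 2 ≤ d) ∨ (n = 2 ∧ 7 ≤ d)) :
    2 * q * (d - 1) *
        Nat.card {f : MvPolynomial (Fin (n + 1)) F //
          f ∈ MvPolynomial.homogeneousSubmodule (Fin (n + 1)) F d ∧ f ≠ 0 ∧
          ∃ a b : MvPolynomial (Fin (n + 1)) F,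
            0 < a.totalDegree ∧ 0 < b.totalDegree ∧ f = a * b} ≤
      q ^ ((n + d).choose n) - 1 := by
  have hq : 2 ≤ q := hF ▸ Fintype.one_lt_card
  have hcount := MvPolynomial.natCard_reducible_le F (σ := Fin (n + 1)) d
  simp only [Nat.card_eq_fintype_card (α := F), hF, Fintype.card_fin,
    Nat.multichoose_succ_eq_choose] at hcount
  exact (Nat.mul_le_mul_left _ hcount).trans (two_mul_mul_sum_pred_mul_pred_le hq h)

/-- **Lemma (bound `t(d−1) ≤ 1/(2q)`).** Let `q` be a prime power, `F = F_q`, and `n, d`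
integers with `(n ≥ 3 and d ≥ 2)` or `(n = 2 and d ≥ 7)`; `m = (n+d).choose n`. If `R` is
the number of nonzero reducible homogeneous degree-`d` polynomials in `n+1` variables over
`F` and `t = R/(q^m − 1)`, then `t·(d−1) ≤ 1/(2q)`, i.e. `2q(d−1)·R ≤ q^m − 1`. -/
theorem stmt12 (q : ℕ) (hq : IsPrimePow q) (F : Type*) [Field F] [Fintype F]
    (hF : Fintype.card F = q) (n d : ℕ)
    (h : (3 ≤ n ∧ 2 ≤ d) ∨ (n = 2 ∧ 7 ≤ d)) :
    2 * q * (d - 1) *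
        Nat.card {f : MvPolynomial (Fin (n + 1)) F //
          f ∈ MvPolynomial.homogeneousSubmodule (Fin (n + 1)) F d ∧ f ≠ 0 ∧
          ∃ a b : MvPolynomial (Fin (n + 1)) F,
            0 < a.totalDegree ∧ 0 < b.totalDegree ∧ f = a * b} ≤
      q ^ ((n + d).choose n) - 1 :=
  stmt12_general q F hF n d h
end

section
/- Let q be a prime power and n ≥ 2, d ≥ 2 integers. The number of irreducible nonconstant homogeneous polynomials of degree at most d in F_q[x_0, …, x_n], counted up to multiplication by nonzero scalars (equivalently, the number of irreducible hypersurfaces in ℙⁿ over F_q of degree at most d), is at most (1/(q−1))·(q^{binom(n+d,d)} − q^{binom(n+d−1,d−1)} + 2(q^{n+1} − 1)). -/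
/-!
Fix two distinct variables `x₀, x₁`. If `f` is an irreducible form of degree `e ≤ d`, then
`f * x₁ ^ (d - e)` is a form of degree `d`, and by unique factorization it determines the class
of `f`. Hence, counting all `q - 1` scalar multiples, the classes other than that of `x₀` inject
into the forms of degree `d` not divisible by `x₀`. There are at most
`q ^ C(n+d, d) - q ^ C(n+d-1, d-1)` of those: all forms of degree `d` minus the multiples
`x₀ * g` with `g` of degree `d - 1`. The class of `x₀` contributes `q - 1 ≤ 2 (q ^ (n+1) - 1)`.
-/

open MvPolynomial

section UniqueFactorization

variable {α : Type*} [CommMonoidWithZero α] [IsCancelMulZero α]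

theorem Prime.associated_of_associated_mul_pow {f g p : α} (hf : Prime f) (hg : Prime g)
    (hp : Irreducible p) {a b : ℕ} (h : Associated (f * p ^ a) (g * p ^ b)) :
    Associated f g := by
  rcases hf.dvd_or_dvd ((dvd_mul_right f _).trans h.dvd) with hfg | hfp
  · exact hf.irreducible.associated_of_dvd hg.irreducible hfg
  rcases hg.dvd_or_dvd ((dvd_mul_right g _).trans h.symm.dvd) with hgf | hgp
  · exact (hg.irreducible.associated_of_dvd hf.irreducible hgf).symm
  have hfp' := hf.irreducible.associated_of_dvd hp (hf.dvd_of_dvd_pow hfp)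
  have hgp' := hg.irreducible.associated_of_dvd hp (hg.dvd_of_dvd_pow hgp)
  exact hfp'.trans hgp'.symm

theorem Prime.not_dvd_mul_pow {p f r : α} (hp : Prime p) (hf : Irreducible f)
    (hr : Irreducible r) (hpf : ¬Associated p f) (hpr : ¬Associated p r) (a : ℕ) :
    ¬p ∣ f * r ^ a := by
  intro hdvd
  rcases hp.dvd_or_dvd hdvd with h | h
  · exact hpf (hp.irreducible.associated_of_dvd hf h)
  · exact hpr (hp.irreducible.associated_of_dvd hr (hp.dvd_of_dvd_pow h))

end UniqueFactorization

theorem natCard_units_mul_natCard_le_ncard {K R ι : Type*} [Field K] [CommRing R] [Algebra K R]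
    [NoZeroSMulDivisors K R] {s : Set R} (hs : s.Finite)
    (hsmul : ∀ (u : Kˣ), ∀ x ∈ s, (u : K) • x ∈ s) (Φ : ι → R) (hΦs : ∀ i, Φ i ∈ s)
    (hΦ0 : ∀ i, Φ i ≠ 0) (hΦ : ∀ i j, Associated (Φ i) (Φ j) → i = j) :
    Nat.card Kˣ * Nat.card ι ≤ s.ncard := by
  have hassoc (u : Kˣ) (x : R) : Associated ((u : K) • x) x := by
    rw [Algebra.smul_def]
    exact associated_unit_mul_left _ _ (u.isUnit.map (algebraMap K R))
  let Ψ : Kˣ × ι → s := fun p => ⟨(p.1 : K) • Φ p.2, hsmul p.1 _ (hΦs p.2)⟩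
  have hΨ : Function.Injective Ψ := by
    rintro ⟨u, i⟩ ⟨v, j⟩ h
    have h' : (u : K) • Φ i = (v : K) • Φ j := congrArg Subtype.val h
    obtain rfl : i = j := hΦ i j ((hassoc u _).symm.trans (h' ▸ hassoc v _))
    exact Prod.ext (Units.ext (smul_left_injective K (hΦ0 i) h')) rfl
  have := hs.to_subtype
  rw [← Nat.card_prod, ← Nat.card_coe_set_eq]
  exact Nat.card_le_card_of_injective Ψ hΨ

theorem Finsupp.natCard_degree_eq (σ : Type*) (m : ℕ) :
    Nat.card {P : σ →₀ ℕ // P.degree = m} = (Nat.card σ + m - 1).choose m := by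
  classical
  rw [← Sym.natCard_sym_eq_choose]
  exact Nat.card_congr (Sym.equivNatSum σ m).symm

namespace MvPolynomial

variable {σ : Type*}

theorem ncard_isHomogeneous (R : Type*) [CommSemiring R] [Finite σ] (m : ℕ) :
    {f : MvPolynomial σ R | f.IsHomogeneous m}.ncard =
      Nat.card R ^ (Nat.card σ + m - 1).choose m := by
  classical
  let monomials : Set (σ →₀ ℕ) := {P | P.degree = m}
  have : Finite monomials := .of_equiv _ (Sym.equivNatSum σ m)
  have e : {f : MvPolynomial σ R | f.IsHomogeneous m} ≃ (monomials → R) :=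
    ((LinearEquiv.ofEq _ _ (homogeneousSubmodule_eq_finsupp_supported σ R m)).trans
      (AddMonoidAlgebra.supportedEquivFinsupp _)).toEquiv.trans Finsupp.equivFunOnFinite
  rw [← Nat.card_coe_set_eq, Nat.card_congr e, Nat.card_fun]
  exact congrArg _ (Finsupp.natCard_degree_eq σ m)

theorem finite_isHomogeneous {R : Type*} [CommSemiring R] [Finite R] [Finite σ] (m : ℕ) :
    {f : MvPolynomial σ R | f.IsHomogeneous m}.Finite := by
  apply Set.finite_of_ncard_pos
  rw [ncard_isHomogeneous]
  exact Nat.pow_pos Nat.card_pos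

variable {K : Type*} [Field K]

variable (σ K) in
def irreducibleHypersurfacesDegLE (d : ℕ) : Set (Associates (MvPolynomial σ K)) :=
  {c | ∃ f : MvPolynomial σ K, Irreducible f ∧
    (∃ e : ℕ, 1 ≤ e ∧ e ≤ d ∧ f.IsHomogeneous e) ∧ Associates.mk f = c}

variable [Finite K] [Finite σ]

theorem ncard_isHomogeneous_not_dvd_X_le (i : σ) {d : ℕ} (hd : 1 ≤ d) :
    {f : MvPolynomial σ K | f.IsHomogeneous d ∧ ¬X i ∣ f}.ncard ≤
      {f : MvPolynomial σ K | f.IsHomogeneous d}.ncard -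
        {f : MvPolynomial σ K | f.IsHomogeneous (d - 1)}.ncard := by
  set W := {f : MvPolynomial σ K | f.IsHomogeneous d}
  set D := (X i * ·) '' {f : MvPolynomial σ K | f.IsHomogeneous (d - 1)}
  have hDW : D ⊆ W := by
    rintro _ ⟨g, hg, rfl⟩
    simpa [W, Nat.add_sub_cancel' hd] using (isHomogeneous_X K i).mul hg
  have hW : W.Finite := finite_isHomogeneous d
  calc _ ≤ (W \ D).ncard := by
        refine Set.ncard_le_ncard ?_ hW.sdiff
        rintro f ⟨hf, hfX⟩
        exact ⟨hf, fun ⟨g, _, hg⟩ => hfX ⟨g, hg.symm⟩⟩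
    _ = W.ncard - D.ncard := Set.ncard_sdiff hDW (hW.subset hDW)
    _ = _ := by rw [Set.ncard_image_of_injective _ (mul_right_injective₀ (X_ne_zero i))]

theorem natCard_units_mul_ncard_irreducibleHypersurfacesDegLE_le {i j : σ} (hij : i ≠ j)
    (d : ℕ) :
    Nat.card Kˣ * (irreducibleHypersurfacesDegLE σ K d \ {Associates.mk (X i)}).ncard ≤
      {f : MvPolynomial σ K | f.IsHomogeneous d ∧ ¬X i ∣ f}.ncard := by
  have hrep (c : ↥(irreducibleHypersurfacesDegLE σ K d \ {Associates.mk (X i)})) :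
      ∃ (f : MvPolynomial σ K) (e : ℕ), Irreducible f ∧ f.IsHomogeneous e ∧ e ≤ d ∧
        Associates.mk f = c := by
    obtain ⟨⟨f, hf, ⟨e, -, he, hfe⟩, hc⟩, -⟩ := c.2
    exact ⟨f, e, hf, hfe, he, hc⟩
  choose φ e hirr hhom hle hmk using hrep
  have hprime c := UniqueFactorizationMonoid.irreducible_iff_prime.mp (hirr c)
  rw [← Nat.card_coe_set_eq]
  refine natCard_units_mul_natCard_le_ncard ((finite_isHomogeneous d).subset fun f hf => hf.1)
    ?_ (fun c => φ c * X j ^ (d - e c)) (fun c => ⟨?_, ?_⟩)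
    (fun c => mul_ne_zero (hirr c).ne_zero (pow_ne_zero _ (X_ne_zero j))) fun c c' h => ?_
  · rintro u f ⟨hf, hfX⟩
    refine ⟨(homogeneousSubmodule σ K d).smul_mem (u : K) hf, ?_⟩
    rwa [smul_eq_C_mul, ((u.isUnit).map C).dvd_mul_left]
  · simpa [Nat.add_sub_cancel' (hle c)] using (hhom c).mul ((isHomogeneous_X K j).pow (d - e c))
  · refine X_prime.not_dvd_mul_pow (hirr c) X_prime.irreducible
      (fun h => c.2.2 ((hmk c).symm.trans (Associates.mk_eq_mk_iff_associated.mpr h.symm)))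
      (fun h => hij (X_dvd_X.mp h.dvd)) _
  · apply Subtype.ext
    rw [← hmk c, ← hmk c', Associates.mk_eq_mk_iff_associated]
    exact (hprime c).associated_of_associated_mul_pow (hprime c') X_prime.irreducible h

end MvPolynomial

theorem stmt16_general (q : ℕ) (F : Type*) [Field F] [Fintype F]
    (hF : Fintype.card F = q) (n d : ℕ) (hn : 2 ≤ n) (hd : 2 ≤ d) :
    (q - 1) *
        Nat.card {c : Associates (MvPolynomial (Fin (n + 1)) F) //
          ∃ f : MvPolynomial (Fin (n + 1)) F, Irreducible f ∧
            (∃ e : ℕ, 1 ≤ e ∧ e ≤ d ∧ f.IsHomogeneous e) ∧ Associates.mk f = c} ≤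
      q ^ ((n + d).choose d) - q ^ ((n + d - 1).choose (d - 1)) + 2 * (q ^ (n + 1) - 1) := by
  have : NeZero n := ⟨by omega⟩
  have hclasses := natCard_units_mul_ncard_irreducibleHypersurfacesDegLE_le (K := F)
    (zero_ne_one : (0 : Fin (n + 1)) ≠ 1) d
  set A := irreducibleHypersurfacesDegLE (Fin (n + 1)) F d
  have hforms := ncard_isHomogeneous_not_dvd_X_le (K := F) (0 : Fin (n + 1)) (by omega : 1 ≤ d)
  have hsplit : A.ncard ≤ (A \ {Associates.mk (X 0)}).ncard + 1 := by
    simpa using A.ncard_le_ncard_sdiff_add_ncard {Associates.mk (X 0)}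
  rw [ncard_isHomogeneous, ncard_isHomogeneous, Nat.card_fin, Nat.card_eq_fintype_card, hF,
    show n + 1 + d - 1 = n + d by omega, show n + 1 + (d - 1) - 1 = n + d - 1 by omega] at hforms
  rw [Nat.card_units, Nat.card_eq_fintype_card, hF] at hclasses
  have hq_le_pow : q ≤ q ^ (n + 1) := Nat.le_self_pow (by omega) q
  change _ * Nat.card A ≤ _
  rw [Nat.card_coe_set_eq]
  calc _ ≤ (q - 1) * (A \ {Associates.mk (X 0)}).ncard + (q - 1) := by
        simpa [mul_add] using Nat.mul_le_mul_left (q - 1) hsplit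
    _ ≤ _ := by omega

/-- **Lemma (bound on the number of irreducible hypersurfaces of degree at most `d`).**
Let `q` be a prime power, `F = F_q`, `n ≥ 2`, `d ≥ 2`. The number of irreducible
nonconstant homogeneous polynomials in `F[x_0,…,x_n]` of degree at most `d`, counted up to
multiplication by nonzero scalars (formalized as the number of `Associates`-classes
containing an irreducible homogeneous polynomial of some degree `e` with `1 ≤ e ≤ d`), is
at most `(1/(q−1))·(q^binom(n+d,d) − q^binom(n+d−1,d−1) + 2(q^{n+1} − 1))`; equivalently,
`(q−1)` times this count is at most `q^binom(n+d,d) − q^binom(n+d−1,d−1) + 2(q^{n+1} − 1)`. -/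
theorem stmt16 (q : ℕ) (hq : IsPrimePow q) (F : Type*) [Field F] [Fintype F]
    (hF : Fintype.card F = q) (n d : ℕ) (hn : 2 ≤ n) (hd : 2 ≤ d) :
    (q - 1) *
        Nat.card {c : Associates (MvPolynomial (Fin (n + 1)) F) //
          ∃ f : MvPolynomial (Fin (n + 1)) F, Irreducible f ∧
            (∃ e : ℕ, 1 ≤ e ∧ e ≤ d ∧ f.IsHomogeneous e) ∧ Associates.mk f = c} ≤
      q ^ ((n + d).choose d) - q ^ ((n + d - 1).choose (d - 1)) + 2 * (q ^ (n + 1) - 1) :=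
  stmt16_general q F hF n d hn hd
end
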